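/- Let E be a spectral sequence of abelian groups equipped with an operator κ̄ of bidegree (4,24), satisfying the standing hypotheses, and assume additionally that E_2^{s,t} = 0 whenever s < 0. Suppose that κ̄^6 x = 0 for every element x of every group E_{24}^{s,t}. Then E_{24}^{s,t} = 0 for all s ≥ 24 and all t; consequently all differentials d_r for r ≥ 24 vanish and the spectral sequence degenerates at the E_{24}-page (E_r^{s,t} ≅ E_{24}^{s,t} for all r ≥ 24). -/

import Mathlib

/-- A spectral sequence of abelian groups in cohomological Adams indexing:
pages `E r s t` (for `r ≥ 2`; lower pages are irrelevant), differentials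
`d r` of bidegree `(r, r - 1)` squaring to zero, and an identification of the
`(r+1)`-st page with the homology of the `r`-th page, encoded by the map
`pageMap` sending a `d r`-cycle to its class in `E (r+1)`, which is additive,
surjective, and kills exactly the `d r`-boundaries. -/
structure SpectralSequence (E : ℕ → ℤ → ℤ → Type)
    [∀ r s t, AddCommGroup (E r s t)] where
  d : ∀ (r : ℕ) (s t : ℤ), E r s t →+ E r (s + r) (t + r - 1)
  d_d : ∀ (r : ℕ) (s t : ℤ) (x : E r s t),
    d r (s + r) (t + r - 1) (d r s t x) = 0
  pageMap : ∀ (r : ℕ) (s t : ℤ) (x : E r s t), d r s t x = 0 → E (r + 1) s t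
  pageMap_add : ∀ (r : ℕ) (s t : ℤ) (x y : E r s t)
    (hx : d r s t x = 0) (hy : d r s t y = 0) (hxy : d r s t (x + y) = 0),
    pageMap r s t (x + y) hxy = pageMap r s t x hx + pageMap r s t y hy
  pageMap_surjective : ∀ (r : ℕ) (s t : ℤ) (y : E (r + 1) s t),
    ∃ (x : E r s t) (hx : d r s t x = 0), pageMap r s t x hx = y
  pageMap_eq_zero_iff : ∀ (r : ℕ) (s t : ℤ) (x : E r s t) (hx : d r s t x = 0),
    pageMap r s t x hx = 0 ↔
      ∃ (s' t' : ℤ) (h : s' + (r : ℤ) = s) (h' : t' + (r : ℤ) - 1 = t)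
        (w : E r s' t'),
        cast (congrArg₂ (E r) h h') (d r s' t' w) = x

/-- An operator `κ̄` of bidegree `(4, 24)` on a spectral sequence: a family of
group homomorphisms commuting with the differentials and compatible with the
identification of the `(r+1)`-st pages with the homology of the `r`-th pages. -/
structure KappaOp {E : ℕ → ℤ → ℤ → Type} [∀ r s t, AddCommGroup (E r s t)]
    (SS : SpectralSequence E) where
  κ : ∀ (r : ℕ) (s t : ℤ), E r s t →+ E r (s + 4) (t + 24)
  comm_d : ∀ (r : ℕ) (s t : ℤ) (x : E r s t),
    SS.d r (s + 4) (t + 24) (κ r s t x) =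
      cast (congrArg₂ (E r) (by ring) (by ring))
        (κ r (s + r) (t + r - 1) (SS.d r s t x))
  comm_pageMap : ∀ (r : ℕ) (s t : ℤ) (x : E r s t) (hx : SS.d r s t x = 0)
    (hκx : SS.d r (s + 4) (t + 24) (κ r s t x) = 0),
    κ (r + 1) s t (SS.pageMap r s t x hx) =
      SS.pageMap r (s + 4) (t + 24) (κ r s t x) hκx

/-- Iterates `κ̄ ^ n` of the operator `κ̄`. -/
def KappaOp.iter {E : ℕ → ℤ → ℤ → Type} [∀ r s t, AddCommGroup (E r s t)]
    {SS : SpectralSequence E} (K : KappaOp SS) (r : ℕ) (s t : ℤ) :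
    (n : ℕ) → E r s t → E r (s + 4 * n) (t + 24 * n)
  | 0, x => cast (congrArg₂ (E r) (by push_cast; ring) (by push_cast; ring)) x
  | n + 1, x =>
      cast (congrArg₂ (E r) (by push_cast; ring) (by push_cast; ring))
        (K.κ r (s + 4 * n) (t + 24 * n) (K.iter r s t n x))

/-- `x` is `κ̄`-free if `κ̄ ^ n • x ≠ 0` for all `n ≥ 0`. -/
def KappaOp.KappaFree {E : ℕ → ℤ → ℤ → Type} [∀ r s t, AddCommGroup (E r s t)]
    {SS : SpectralSequence E} (K : KappaOp SS) (r : ℕ) (s t : ℤ)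
    (x : E r s t) : Prop :=
  ∀ n : ℕ, K.iter r s t n x ≠ 0

/-- `x` is `κ̄`-divisible if `x = κ̄ • y` for some `y`. -/
def KappaOp.KappaDivisible {E : ℕ → ℤ → ℤ → Type}
    [∀ r s t, AddCommGroup (E r s t)]
    {SS : SpectralSequence E} (K : KappaOp SS) (r : ℕ) (s t : ℤ)
    (x : E r s t) : Prop :=
  ∃ (s' t' : ℤ) (h : s' + 4 = s) (h' : t' + 24 = t) (y : E r s' t'),
    cast (congrArg₂ (E r) h h') (K.κ r s' t' y) = x

/-- The standing hypotheses (satisfied by the `E₂`-term of the elliptic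
spectral sequence for `tmf ∧ Y`): every nonzero element of `E₂` of filtration
`≥ 2` is `κ̄`-free, and every element of `E₂` of filtration `≥ 4` is
`κ̄`-divisible. -/
def KappaOp.StandingHypotheses {E : ℕ → ℤ → ℤ → Type}
    [∀ r s t, AddCommGroup (E r s t)]
    {SS : SpectralSequence E} (K : KappaOp SS) : Prop :=
  (∀ (s t : ℤ) (x : E 2 s t), x ≠ 0 → 2 ≤ s → K.KappaFree 2 s t x) ∧
  (∀ (s t : ℤ) (x : E 2 s t), 4 ≤ s → K.KappaDivisible 2 s t x)

/-! On every page `E_r` with `r ≥ 2` the following persists: `E_r` vanishes in negative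
filtration, every element of filtration `≥ 4` is `κ̄`-divisible, and `κ̄` is injective in
filtrations `≥ r`. Divisibility survives to `E_{r+1}`: if `κ̄ y` is a `d_r`-cycle then
`κ̄ (d_r y) = 0` with `d_r y` in filtration `≥ r`, so `y` is already a cycle. Injectivity survives:
if `κ̄ x = d_r w`, then `w = κ̄ v` by divisibility, so `κ̄ (x - d_r v) = 0` and `x = d_r v` is a
boundary.
On `E₂₄`, injectivity of `κ̄` in filtrations `≥ 24` is incompatible with `κ̄⁶ = 0`, so `E₂₄`
vanishes there. From then on every differential starts in negative filtration or lands in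
filtration `≥ 24`, hence is zero, and the pages no longer change. -/

namespace Bigraded

variable {F : ℤ → ℤ → Type} [∀ s t, AddCommGroup (F s t)] {s t s' t' : ℤ}

theorem cast_zero (h : s = s') (h' : t = t') (p : F s t = F s' t') :
    cast p (0 : F s t) = 0 := by
  subst h h'; rfl

theorem cast_eq_zero_iff (h : s = s') (h' : t = t') (p : F s t = F s' t') (x : F s t) :
    cast p x = 0 ↔ x = 0 := by
  subst h h'; rfl

end Bigraded

open Bigraded

variable {E : ℕ → ℤ → ℤ → Type} [∀ r s t, AddCommGroup (E r s t)]

namespace SpectralSequence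

section

variable (SS : SpectralSequence E)

theorem d_cast (r : ℕ) {s t s' t' : ℤ} (h : s = s') (h' : t = t') (p : E r s t = E r s' t')
    (q : E r (s + r) (t + r - 1) = E r (s' + r) (t' + r - 1)) (x : E r s t) :
    SS.d r s' t' (cast p x) = cast q (SS.d r s t x) := by
  subst h h'; rfl

theorem pageMap_congr {r : ℕ} {s t : ℤ} {x y : E r s t} (e : x = y)
    (hx : SS.d r s t x = 0) (hy : SS.d r s t y = 0) :
    SS.pageMap r s t x hx = SS.pageMap r s t y hy := by
  subst e; rfl

theorem pageMap_zero (r : ℕ) (s t : ℤ) (h : SS.d r s t 0 = 0) :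
    SS.pageMap r s t 0 h = 0 := by
  have h00 : SS.d r s t (0 + 0) = 0 := by rwa [add_zero]
  have key := SS.pageMap_add r s t 0 0 h h h00
  rwa [SS.pageMap_congr (add_zero 0) h00 h, left_eq_add] at key

theorem pageMap_sub {r : ℕ} {s t : ℤ} (x y : E r s t) (hx : SS.d r s t x = 0)
    (hy : SS.d r s t y = 0) (hxy : SS.d r s t (x - y) = 0) :
    SS.pageMap r s t (x - y) hxy = SS.pageMap r s t x hx - SS.pageMap r s t y hy := by
  have hsum : SS.d r s t (x - y + y) = 0 := by rwa [sub_add_cancel]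
  have key := SS.pageMap_add r s t (x - y) y hxy hy hsum
  rw [SS.pageMap_congr (sub_add_cancel x y) hsum hx] at key
  rw [key, add_sub_cancel_right]

theorem pageMap_bijective_of_d_eq_zero {r : ℕ} (hd : ∀ s t (x : E r s t), SS.d r s t x = 0)
    (s t : ℤ) :
    Function.Bijective fun x : {x : E r s t // SS.d r s t x = 0} => SS.pageMap r s t x.1 x.2 := by
  refine ⟨?_, fun y => ?_⟩
  · rintro ⟨a, ha⟩ ⟨b, hb⟩ hab
    have hab' : SS.d r s t (a - b) = 0 := by rw [map_sub, ha, hb, sub_zero]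
    have hbdry : SS.pageMap r s t (a - b) hab' = 0 := by
      rw [SS.pageMap_sub a b ha hb hab']; exact sub_eq_zero.mpr hab
    obtain ⟨s', t', h, h', w, hw⟩ := (SS.pageMap_eq_zero_iff r s t _ hab').mp hbdry
    rw [hd, cast_zero h h', eq_comm, sub_eq_zero] at hw
    exact Subtype.ext hw
  · obtain ⟨x, hx, rfl⟩ := SS.pageMap_surjective r s t y
    exact ⟨⟨x, hx⟩, rfl⟩

end

theorem eq_zero_of_le (SS : SpectralSequence E) {r₀ r : ℕ} (hr : r₀ ≤ r) {s t : ℤ}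
    (h : ∀ x : E r₀ s t, x = 0) : ∀ x : E r s t, x = 0 := by
  induction r, hr using Nat.le_induction with
  | base => exact h
  | succ r _ ih =>
    intro x
    obtain ⟨x', hx', rfl⟩ := SS.pageMap_surjective r s t x
    rw [SS.pageMap_congr (ih x') hx' (map_zero _), pageMap_zero]

end SpectralSequence

namespace KappaOp

variable {SS : SpectralSequence E} (K : KappaOp SS)

theorem kappa_cast (r : ℕ) {s t s' t' : ℤ} (h : s = s') (h' : t = t') (p : E r s t = E r s' t')
    (q : E r (s + 4) (t + 24) = E r (s' + 4) (t' + 24)) (x : E r s t) :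
    K.κ r s' t' (cast p x) = cast q (K.κ r s t x) := by
  subst h h'; rfl

theorem KappaFree.kappa_ne_zero {K : KappaOp SS} {r : ℕ} {s t : ℤ} {x : E r s t}
    (hx : K.KappaFree r s t x) : K.κ r s t x ≠ 0 := by
  intro h
  apply hx 1
  change cast _ (K.κ r (s + 4 * ((0 : ℕ) : ℤ)) (t + 24 * ((0 : ℕ) : ℤ)) (cast _ x)) = 0
  rw [cast_eq_zero_iff (by simp) (by simp), K.kappa_cast r (by simp) (by simp) _
    (congrArg₂ (E r) (by simp) (by simp)), h, cast_zero (by simp) (by simp)]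

theorem eq_zero_of_iter_eq_zero {r : ℕ} {c : ℤ}
    (hinj : ∀ s t (x : E r s t), c ≤ s → K.κ r s t x = 0 → x = 0)
    {s t : ℤ} (hs : c ≤ s) (x : E r s t) (n : ℕ) (hn : K.iter r s t n x = 0) : x = 0 := by
  induction n with
  | zero => exact (cast_eq_zero_iff (by simp) (by simp) _ x).mp hn
  | succ n ih =>
    refine ih (hinj _ _ _ (by omega) ?_)
    exact (cast_eq_zero_iff (by push_cast; ring) (by push_cast; ring) _ _).mp hn

structure PageCondition (r : ℕ) : Prop where
  eq_zero_of_neg : ∀ s t, s < 0 → ∀ x : E r s t, x = 0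
  divisible : ∀ s t (x : E r s t), 4 ≤ s → K.KappaDivisible r s t x
  eq_zero_of_kappa : ∀ s t (x : E r s t), (r : ℤ) ≤ s → K.κ r s t x = 0 → x = 0

theorem pageCondition_two (hyp : K.StandingHypotheses)
    (hneg : ∀ s t : ℤ, s < 0 → ∀ x : E 2 s t, x = 0) : K.PageCondition 2 where
  eq_zero_of_neg := hneg
  divisible := hyp.2
  eq_zero_of_kappa s t x hs hκ := by
    by_contra hx
    exact (hyp.1 s t x hx hs).kappa_ne_zero hκ

namespace PageCondition

variable {K} {r : ℕ}

theorem d_eq_zero_of_d_kappa (hK : K.PageCondition r) {s t : ℤ} (hs : 0 ≤ s) (y : E r s t)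
    (hy : SS.d r (s + 4) (t + 24) (K.κ r s t y) = 0) : SS.d r s t y = 0 := by
  refine hK.eq_zero_of_kappa _ _ _ (by omega) ?_
  have hcomm := K.comm_d r s t y
  rwa [hy, eq_comm, cast_eq_zero_iff (by ring) (by ring)] at hcomm

theorem divisible_succ (hK : K.PageCondition r) (s t : ℤ) (x : E (r + 1) s t) (hs : 4 ≤ s) :
    K.KappaDivisible (r + 1) s t x := by
  obtain ⟨x', hx', rfl⟩ := SS.pageMap_surjective r s t x
  obtain ⟨s', t', rfl, rfl, y, rfl⟩ := hK.divisible s t x' hs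
  have hy := hK.d_eq_zero_of_d_kappa (by omega) y hx'
  exact ⟨s', t', rfl, rfl, SS.pageMap r s' t' y hy, K.comm_pageMap r s' t' y hy hx'⟩

theorem eq_zero_of_kappa_succ (hK : K.PageCondition r) (s t : ℤ) (x : E (r + 1) s t)
    (hs : ((r + 1 : ℕ) : ℤ) ≤ s) (hκ : K.κ (r + 1) s t x = 0) : x = 0 := by
  obtain ⟨x', hx', rfl⟩ := SS.pageMap_surjective r s t x
  have hκx' : SS.d r (s + 4) (t + 24) (K.κ r s t x') = 0 := by
    rw [K.comm_d, hx', map_zero, cast_zero (by ring) (by ring)]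
  rw [K.comm_pageMap r s t x' hx' hκx', SS.pageMap_eq_zero_iff] at hκ
  obtain ⟨s', t', h, h', w, hw⟩ := hκ
  obtain ⟨s'', t'', rfl, rfl, v, rfl⟩ := hK.divisible s' t' w (by omega)
  set u : E r s t := cast (congrArg₂ (E r) (by omega) (by omega)) (SS.d r s'' t'' v)
  have hκu : K.κ r s t u = K.κ r s t x' := by
    rw [K.kappa_cast r (by omega) (by omega) _ (congrArg₂ (E r) (by omega) (by omega)), ← hw,
      SS.d_cast r rfl rfl _ (congrArg₂ (E r) (by omega) (by omega)), K.comm_d]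
    simp only [cast_cast]
  have hxu : x' = u := by
    refine sub_eq_zero.mp (hK.eq_zero_of_kappa s t _ (by omega) ?_)
    rw [map_sub, hκu, sub_self]
  rw [SS.pageMap_eq_zero_iff]
  exact ⟨s'', t'', by omega, by omega, v, hxu.symm⟩

theorem succ (hK : K.PageCondition r) : K.PageCondition (r + 1) where
  eq_zero_of_neg s t hs := SS.eq_zero_of_le r.le_succ (hK.eq_zero_of_neg s t hs)
  divisible := hK.divisible_succ
  eq_zero_of_kappa := hK.eq_zero_of_kappa_succ

end PageCondition

theorem pageCondition_of_le (hyp : K.StandingHypotheses)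
    (hneg : ∀ s t : ℤ, s < 0 → ∀ x : E 2 s t, x = 0) {r : ℕ} (hr : 2 ≤ r) :
    K.PageCondition r := by
  induction r, hr using Nat.le_induction with
  | base => exact K.pageCondition_two hyp hneg
  | succ r _ ih => exact ih.succ

end KappaOp

/-- For a spectral sequence with a `κ̄`-operator of bidegree `(4,24)`
satisfying the standing hypotheses, with `E₂` vanishing in negative
filtrations, and such that `κ̄ ^ 6` annihilates the `E₂₄`-page: the
`E₂₄`-page vanishes in filtrations `s ≥ 24`, all differentials `d_r` for
`r ≥ 24` vanish, and the spectral sequence degenerates at `E₂₄` (for every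
`r ≥ 24` the map induced by `pageMap` from the `d_r`-cycles of `E_r` to
`E_{r+1}` is a bijection, so `E_r ≅ E₂₄` for all `r ≥ 24`). -/
theorem vanishing_line_and_degeneration {E : ℕ → ℤ → ℤ → Type}
    [∀ r s t, AddCommGroup (E r s t)]
    {SS : SpectralSequence E} (K : KappaOp SS)
    (hyp : K.StandingHypotheses)
    (hneg : ∀ s t : ℤ, s < 0 → ∀ x : E 2 s t, x = 0)
    (hkappa6 : ∀ (s t : ℤ) (x : E 24 s t), K.iter 24 s t 6 x = 0) :
    (∀ s t : ℤ, 24 ≤ s → ∀ x : E 24 s t, x = 0) ∧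
    (∀ r : ℕ, 24 ≤ r → ∀ (s t : ℤ) (x : E r s t), SS.d r s t x = 0) ∧
    (∀ r : ℕ, 24 ≤ r → ∀ s t : ℤ,
      Function.Bijective fun x : {x : E r s t // SS.d r s t x = 0} =>
        SS.pageMap r s t x.1 x.2) := by
  have h24 := K.pageCondition_of_le hyp hneg (by norm_num : 2 ≤ 24)
  have vanishing : ∀ s t : ℤ, 24 ≤ s → ∀ x : E 24 s t, x = 0 := fun s t hs x =>
    K.eq_zero_of_iter_eq_zero h24.eq_zero_of_kappa (by exact_mod_cast hs) x 6 (hkappa6 s t x)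
  have d_eq_zero : ∀ r : ℕ, 24 ≤ r → ∀ (s t : ℤ) (x : E r s t), SS.d r s t x = 0 := by
    intro r hr s t x
    rcases lt_or_ge s 0 with hs | hs
    · rw [SS.eq_zero_of_le hr (h24.eq_zero_of_neg s t hs) x, map_zero]
    · exact SS.eq_zero_of_le hr (vanishing _ _ (by omega)) _
  exact ⟨vanishing, d_eq_zero, fun r hr => SS.pageMap_bijective_of_d_eq_zero (d_eq_zero r hr)⟩
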